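/- arXiv:1004.1470 — 6 statements merged into one kernel-verified Lean document; each statement's English description precedes it below -/
import Mathlib

section
/- Let p, q be complex numbers with p + q = 1, q ≠ 0, and τ = p/q. Then for any complex numbers ξ₁, ..., ξ_k (with all denominators nonzero), det(1/(p + q·ξᵢ·ξⱼ − ξᵢ))_{1≤i,j≤k} = (−1)^k (pq)^{k(k−1)/2} q^{−k} · ∏_{i≠j} (ξⱼ − ξᵢ)/(p + q·ξᵢξⱼ − ξᵢ) · ∏_i 1/((1 − ξᵢ)(ξᵢ − τ)). -/
/-!
Writing `p + q ξᵢ ξⱼ - ξᵢ = ξᵢ (q ξⱼ - 1) + p`, the matrix has the Cauchy-like form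
`1 / (aᵢ cⱼ + p)`, whose determinant is `∏_{i<j} -p (aⱼ - aᵢ)(cⱼ - cᵢ) / ∏_{i,j} (aᵢ cⱼ + p)`:
the Schur complement of the `(0,0)` entry is again of this form after scaling its rows by
`-p (aᵢ - a₀) / (aᵢ c₀ + p)` and its columns by `(cⱼ - c₀) / (a₀ cⱼ + p)`. For `aᵢ = ξᵢ`,
`cⱼ = q ξⱼ - 1` the pairs `i < j` contribute `(p q)^(k(k-1)/2) ∏_{i ≠ j} (ξⱼ - ξᵢ)`, and the
diagonal denominators factor as `p + q ξ² - ξ = -q (1 - ξ)(ξ - τ)` because `p + q = 1`, `p = q τ`.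
-/

open Finset

theorem Matrix.det_succ_eq_mul_det_schur {K : Type*} [Field K] {n : ℕ}
    (A : Matrix (Fin (n + 1)) (Fin (n + 1)) K) (h : A 0 0 ≠ 0) :
    A.det = A 0 0 * (Matrix.of fun i j : Fin n =>
      A i.succ j.succ - A i.succ 0 / A 0 0 * A 0 j.succ).det := by
  let c : Fin (n + 1) → K := Fin.cons 0 fun i => A i.succ 0 / A 0 0
  let B : Matrix (Fin (n + 1)) (Fin (n + 1)) K := Matrix.of fun i j => A i j - c i * A 0 j
  have hB : A.det = B.det :=
    Matrix.det_eq_of_forall_row_eq_smul_add_const c 0 rfl fun i j => by simp [B, c]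
  rw [hB, Matrix.det_succ_column_zero, Fin.sum_univ_succ]
  simp [B, c, h, Matrix.submatrix]

theorem Matrix.det_inv_mul_add {K : Type*} [Field K] {n : ℕ} (p : K) (a c : Fin n → K)
    (h : ∀ i j, a i * c j + p ≠ 0) :
    (Matrix.of fun i j => (a i * c j + p)⁻¹).det =
      (∏ i, ∏ j ∈ Ioi i, -p * (a j - a i) * (c j - c i)) * ∏ i, ∏ j, (a i * c j + p)⁻¹ := by
  induction n with
  | zero => simp
  | succ n ih =>
    have hschur : (Matrix.of fun i j : Fin n =>
        (a i.succ * c j.succ + p)⁻¹ -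
          (a i.succ * c 0 + p)⁻¹ / (a 0 * c 0 + p)⁻¹ * (a 0 * c j.succ + p)⁻¹) =
        Matrix.of fun i j => (-p * (a i.succ - a 0) * (a i.succ * c 0 + p)⁻¹) *
          Matrix.of (fun i j => (c j.succ - c 0) * (a 0 * c j.succ + p)⁻¹ *
            Matrix.of (fun i j => (a i.succ * c j.succ + p)⁻¹) i j) i j := by
      ext i j
      simp only [Matrix.of_apply]
      rw [div_inv_eq_mul, eq_comm, ← sub_eq_zero]
      field_simp [h i.succ j.succ, h i.succ 0, h 0 j.succ]
      ring
    rw [Matrix.det_succ_eq_mul_det_schur _ (by simpa using h 0 0)]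
    simp only [Matrix.of_apply]
    rw [hschur, Matrix.det_mul_column, Matrix.det_mul_row,
      ih _ _ fun i j => h i.succ j.succ]
    simp only [Fin.prod_univ_succ, Fin.prod_Ioi_zero, Fin.prod_Ioi_succ, prod_mul_distrib]
    ring

theorem Fin.prod_prod_Ioi_const {M : Type*} [CommMonoid M] (z : M) :
    ∀ k : ℕ, ∏ i : Fin k, ∏ _j ∈ Ioi i, z = z ^ (k * (k - 1) / 2)
  | 0 => by simp
  | k + 1 => by
    rw [Fin.prod_univ_succ, Fin.prod_Ioi_zero]
    simp_rw [Fin.prod_Ioi_succ]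
    rw [Fin.prod_prod_Ioi_const z k, Fin.prod_const, Nat.triangle_succ, pow_add, mul_comm]

theorem stmt0_general (p q τ : ℂ) (hpq : p + q = 1) (hq : q ≠ 0) (hτ : τ = p / q)
    (k : ℕ) (ξ : Fin k → ℂ)
    (hden : ∀ i j, p + q * ξ i * ξ j - ξ i ≠ 0) :
    (Matrix.of fun i j : Fin k => 1 / (p + q * ξ i * ξ j - ξ i)).det =
      (-1 : ℂ) ^ k * (p * q) ^ (k * (k - 1) / 2) * q ^ (-(k : ℤ)) *
        (∏ i, ∏ j ∈ univ.erase i, (ξ j - ξ i) / (p + q * ξ i * ξ j - ξ i)) *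
        ∏ i, 1 / ((1 - ξ i) * (ξ i - τ)) := by
  have hcauchy : ∀ i j, p + q * ξ i * ξ j - ξ i = ξ i * (q * ξ j - 1) + p := fun i j => by ring
  have hdiag : ∀ i, ξ i * (q * ξ i - 1) + p = -q * ((1 - ξ i) * (ξ i - τ)) := fun i => by
    rw [hτ]; field_simp; linear_combination ξ i * hpq
  have hpairs : ∏ i, ∏ j ∈ Ioi i, -p * (ξ j - ξ i) * ((q * ξ j - 1) - (q * ξ i - 1)) =
      (p * q) ^ (k * (k - 1) / 2) * ∏ i, ∏ j ∈ univ.erase i, (ξ j - ξ i) := by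
    simp_rw [← compl_singleton]
    rw [← Fin.prod_prod_Ioi_const, ← prod_prod_Ioi_mul_eq_prod_prod_off_diag, ← prod_mul_distrib]
    refine prod_congr rfl fun i _ => ?_
    rw [← prod_mul_distrib]
    exact prod_congr rfl fun j _ => by ring
  have hsplit : ∏ i, ∏ j, (ξ i * (q * ξ j - 1) + p)⁻¹ =
      (∏ i, (ξ i * (q * ξ i - 1) + p)⁻¹) * ∏ i, ∏ j ∈ univ.erase i, (ξ i * (q * ξ j - 1) + p)⁻¹ := by
    rw [← prod_mul_distrib]
    exact prod_congr rfl fun i _ => (mul_prod_erase univ _ (mem_univ i)).symm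
  simp only [one_div, hcauchy]
  rw [Matrix.det_inv_mul_add p ξ _ (fun i j => hcauchy i j ▸ hden i j), hpairs, hsplit]
  simp only [hdiag, div_eq_mul_inv, prod_mul_distrib, mul_inv, Fin.prod_const, zpow_neg, zpow_natCast]
  ring

/-- Lemma 3.1 (Tracy–Widom determinant identity). -/
theorem stmt0 (p q τ : ℂ) (hpq : p + q = 1) (hq : q ≠ 0) (hτ : τ = p / q)
    (k : ℕ) (ξ : Fin k → ℂ)
    (hden : ∀ i j, p + q * ξ i * ξ j - ξ i ≠ 0)
    (h1 : ∀ i, 1 - ξ i ≠ 0) (h2 : ∀ i, ξ i - τ ≠ 0) :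
    (Matrix.of fun i j : Fin k => 1 / (p + q * ξ i * ξ j - ξ i)).det =
      (-1 : ℂ) ^ k * (p * q) ^ (k * (k - 1) / 2) * q ^ (-(k : ℤ)) *
        (∏ i, ∏ j ∈ univ.erase i, (ξ j - ξ i) / (p + q * ξ i * ξ j - ξ i)) *
        ∏ i, 1 / ((1 - ξ i) * (ξ i - τ)) :=
  stmt0_general p q τ hpq hq hτ k ξ hden
end

section
/- Let p, q be complex numbers with p + q = 1, pq ≠ 0, τ = p/q, and k ∈ ℕ. For complex ξ₁, ..., ξ_k with all denominators nonzero, (ξ₁²ξ₂²⋯ξ_k² − τ^k)/(1+τ)^{k−1} = ∑_{l=1}^{k} (ξ_l² − τ) · ∏_{i≠l} [ (p + q·ξᵢξ_l − ξᵢ)/(ξ_l − ξᵢ) · (τ − ξ_l ξᵢ)/(1 + τ − ξ_l − ξᵢ) ]. -/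
/-!
Put `u(ξ) = (ξ - 1)(ξ - τ)`. Since `u(ξₗ) - u(ξᵢ) = (ξₗ - ξᵢ)(ξₗ + ξᵢ - 1 - τ)` carries both
denominators, and `q = 1/(1 + τ)`, each factor of the product equals
`q (ξᵢ² uₗ - τ uᵢ) / (uₗ - uᵢ)`. The theorem is then the case `aᵢ = ξᵢ²`, `bᵢ = τ` of
`∑ₗ (aₗ - bₗ) ∏_{i ≠ l} (aᵢ uₗ - bᵢ uᵢ) / (uₗ - uᵢ) = ∏ aᵢ - ∏ bᵢ` for distinct nodes `uᵢ`.
If no node vanishes, this is Lagrange interpolation of `∏ (aᵢ x - bᵢ uᵢ) - ∏ aᵢ ∏ (x - uᵢ)`,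
a polynomial of degree `< n`, at `x = 0`; a vanishing node `uⱼ = 0` turns the `j`-th factor of
every other term into `aⱼ`, which reduces to the remaining nodes.
-/

open Finset Polynomial Lagrange

theorem degree_prod_sub_C_mul_nodal_lt {K ι : Type*} [Field K] (s : Finset ι) (a c u : ι → K) :
    (∏ i ∈ s, (C (a i) * X - C (c i)) - C (∏ i ∈ s, a i) * nodal s u).degree < #s := by
  have hlin : ∀ i ∈ s, (C (a i) * X - C (c i)).natDegree ≤ 1 := fun i _ => by compute_degree
  have hprod : (∏ i ∈ s, (C (a i) * X - C (c i))).natDegree ≤ #s :=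
    (natDegree_prod_le _ _).trans (by simpa using sum_le_sum hlin)
  have hnodal : (C (∏ i ∈ s, a i) * nodal s u).natDegree ≤ #s :=
    (natDegree_C_mul_le _ _).trans natDegree_nodal.le
  rw [degree_lt_iff_coeff_zero]
  intro m hm
  rcases hm.eq_or_lt with rfl | hm
  · have htop := coeff_prod_of_natDegree_le s _ 1 hlin
    rw [mul_one] at htop
    rw [coeff_sub, htop, coeff_C_mul, ← natDegree_nodal (s := s) (v := u),
      nodal_monic.coeff_natDegree]
    simp
  · exact coeff_eq_zero_of_natDegree_lt
      ((natDegree_sub_le _ _).trans_lt (max_lt (hprod.trans_lt hm) (hnodal.trans_lt hm)))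

section NodeSum

variable {K ι : Type*} [Field K] [DecidableEq ι] {s : Finset ι} {a b u : ι → K}

theorem sum_sub_mul_prod_div_sub_eq_of_ne_zero (hu : Set.InjOn u s) (h0 : ∀ i ∈ s, u i ≠ 0) :
    ∑ l ∈ s, (a l - b l) * ∏ i ∈ s.erase l, (a i * u l - b i * u i) / (u l - u i) =
      ∏ i ∈ s, a i - ∏ i ∈ s, b i := by
  have hH := congrArg (eval 0)
    (eq_interpolate hu (degree_prod_sub_C_mul_nodal_lt s a (fun i => b i * u i) u))
  rw [eval_interpolate_not_at_node _ fun i hi => (h0 i hi).symm] at hH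
  simp only [eval_sub, eval_mul, eval_C, eval_prod, eval_X, eval_nodal] at hH
  have hterm : ∀ l ∈ s, nodalWeight s u l * (0 - u l)⁻¹ *
      (∏ i ∈ s, (a i * u l - b i * u i) - (∏ i ∈ s, a i) * ∏ i ∈ s, (u l - u i)) =
      -((a l - b l) * ∏ i ∈ s.erase l, (a i * u l - b i * u i) / (u l - u i)) := by
    intro l hl
    rw [prod_eq_zero (f := fun i => u l - u i) hl (sub_self _), mul_zero, sub_zero,
      ← mul_prod_erase s _ hl, nodalWeight, prod_div_distrib,
      div_eq_mul_inv _ (∏ i ∈ s.erase l, _), prod_inv_distrib]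
    field_simp [h0 l hl]
    ring
  have hb : ∏ i ∈ s, (a i * 0 - b i * u i) = (∏ i ∈ s, b i) * ∏ i ∈ s, (0 - u i) := by
    rw [← prod_mul_distrib]
    exact prod_congr rfl fun i _ => by ring
  rw [sum_congr rfl hterm, sum_neg_distrib, hb] at hH
  have hnodal : ∏ i ∈ s, (0 - u i) ≠ 0 := prod_ne_zero_iff.2 fun i hi => by simpa using h0 i hi
  apply mul_left_cancel₀ hnodal
  linear_combination hH

theorem sum_sub_mul_prod_div_sub_eq (hu : Set.InjOn u s) :
    ∑ l ∈ s, (a l - b l) * ∏ i ∈ s.erase l, (a i * u l - b i * u i) / (u l - u i) =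
      ∏ i ∈ s, a i - ∏ i ∈ s, b i := by
  by_cases h0 : ∀ i ∈ s, u i ≠ 0
  · exact sum_sub_mul_prod_div_sub_eq_of_ne_zero hu h0
  push Not at h0
  obtain ⟨j, hj, huj⟩ := h0
  have hne : ∀ i ∈ s.erase j, u i ≠ 0 := fun i hi =>
    huj ▸ hu.ne (mem_of_mem_erase hi) hj (ne_of_mem_erase hi)
  have hrest := sum_sub_mul_prod_div_sub_eq_of_ne_zero (a := a) (b := b) (hu.mono (by simp)) hne
  have hj_term : ∏ i ∈ s.erase j, (a i * u j - b i * u i) / (u j - u i) = ∏ i ∈ s.erase j, b i :=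
    prod_congr rfl fun i hi => by
      rw [huj, mul_zero, zero_sub, zero_sub, neg_div_neg_eq, mul_div_cancel_right₀ _ (hne i hi)]
  have hl_term : ∀ l ∈ s.erase j,
      (a l - b l) * ∏ i ∈ s.erase l, (a i * u l - b i * u i) / (u l - u i) =
        a j * ((a l - b l) * ∏ i ∈ (s.erase j).erase l, (a i * u l - b i * u i) / (u l - u i)) := by
    intro l hl
    rw [erase_right_comm, ← mul_prod_erase _ _ (mem_erase.2 ⟨(ne_of_mem_erase hl).symm, hj⟩),
      huj, mul_zero, sub_zero, sub_zero, mul_div_cancel_right₀ _ (hne l hl)]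
    ring
  rw [← add_sum_erase _ _ hj, hj_term, sum_congr rfl hl_term, ← mul_sum, hrest,
    ← mul_prod_erase s a hj, ← mul_prod_erase s b hj]
  ring

end NodeSum

theorem factor_eq_mul_div_sub {K : Type*} [Field K] {p q τ x y : K} (hp : p = τ * q)
    (hq : q * (1 + τ) = 1) :
    (p + q * x * y - x) / (y - x) * ((τ - y * x) / (1 + τ - y - x)) =
      q * ((x ^ 2 * ((y - 1) * (y - τ)) - τ * ((x - 1) * (x - τ))) /
        ((y - 1) * (y - τ) - (x - 1) * (x - τ))) := by
  have hnum : (p + q * x * y - x) * (τ - y * x) =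
      -(q * (x ^ 2 * ((y - 1) * (y - τ)) - τ * ((x - 1) * (x - τ)))) := by
    rw [hp]
    linear_combination x * (τ - y * x) * hq
  have hden : (y - 1) * (y - τ) - (x - 1) * (x - τ) = -((y - x) * (1 + τ - y - x)) := by ring
  rw [div_mul_div_comm, hnum, hden, div_neg, neg_div, mul_div_assoc, mul_neg]

theorem stmt2_general (p q τ : ℂ) (hpq : p + q = 1) (hpq0 : p * q ≠ 0) (hτ : τ = p / q)
    (k : ℕ) (ξ : Fin k → ℂ)
    (hdist : ∀ i j, i ≠ j → ξ i ≠ ξ j)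
    (hsum : ∀ i j, i ≠ j → 1 + τ - ξ i - ξ j ≠ 0) :
    ((∏ i, ξ i ^ 2) - τ ^ k) / (1 + τ) ^ (k - 1) =
      ∑ l, (ξ l ^ 2 - τ) * ∏ i ∈ univ.erase l,
        ((p + q * ξ i * ξ l - ξ i) / (ξ l - ξ i) *
          ((τ - ξ l * ξ i) / (1 + τ - ξ l - ξ i))) := by
  have hq : q ≠ 0 := right_ne_zero_of_mul hpq0
  have hp : p = τ * q := by rw [hτ, div_mul_cancel₀ _ hq]
  have hq1 : q * (1 + τ) = 1 := by linear_combination hpq - hp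
  set u : Fin k → ℂ := fun i => (ξ i - 1) * (ξ i - τ)
  have hu : Set.InjOn u (univ : Finset (Fin k)) := fun l _ i _ h => by
    by_contra hli
    have hsub : u l - u i = -((ξ l - ξ i) * (1 + τ - ξ l - ξ i)) := by simp only [u]; ring
    exact mul_ne_zero (sub_ne_zero.2 (hdist l i hli)) (hsum l i hli)
      (by linear_combination hsub - h)
  have key := sum_sub_mul_prod_div_sub_eq (a := fun i => ξ i ^ 2) (b := fun _ => τ) hu
  simp only [prod_const, card_univ, Fintype.card_fin] at key
  rw [sum_congr rfl fun l _ => by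
    rw [prod_congr rfl fun i _ => factor_eq_mul_div_sub hp hq1, prod_mul_distrib, prod_const,
      card_erase_of_mem (mem_univ l), card_univ, Fintype.card_fin, mul_left_comm],
    ← mul_sum, key, eq_inv_of_mul_eq_one_left hq1, inv_pow, div_eq_inv_mul]

/-- Equation (3.7): the key rational-function identity for the induction step. -/
theorem stmt2 (p q τ : ℂ) (hpq : p + q = 1) (hpq0 : p * q ≠ 0) (hτ : τ = p / q)
    (k : ℕ) (ξ : Fin k → ℂ)
    (hdist : ∀ i j, i ≠ j → ξ i ≠ ξ j)
    (hsum : ∀ i j, i ≠ j → 1 + τ - ξ i - ξ j ≠ 0)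
    (hτ1 : (1 : ℂ) + τ ≠ 0) :
    ((∏ i, ξ i ^ 2) - τ ^ k) / (1 + τ) ^ (k - 1) =
      ∑ l, (ξ l ^ 2 - τ) * ∏ i ∈ univ.erase l,
        ((p + q * ξ i * ξ l - ξ i) / (ξ l - ξ i) *
          ((τ - ξ l * ξ i) / (1 + τ - ξ l - ξ i))) :=
  stmt2_general p q τ hpq hpq0 hτ k ξ hdist hsum
end

section
/- Let p, q be complex with p+q=1, pq ≠ 0, τ = p/q ≠ 1, and let ξ₁,...,ξ_k be complex numbers distinct from 1, τ, and each other, with 1 + τ − ξᵢ − ξⱼ ≠ 0 for all i, j. Define g(z) = ∏_{l} (p + q·ξ_l·z − ξ_l)/(z − ξ_l) · ∏_{l} (τ − z·ξ_l)/(1 + τ − z − ξ_l) · (2z − 1 − τ)/((z − 1)(qz − p)). Then the residue of g at z = 1 equals p^k/q and the residue of g at z = τ equals p^k/q. -/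
open Finset Filter Topology

/-!
Both poles are simple, so each residue is the value at the pole of the remaining factors.
At `z = 1` every factor of the first product equals `p` (as `p + q = 1`) and every factor of
the second equals `1`; at `z = τ` they equal `q` and `τ`, and `qτ = p`. In both cases the
last factor contributes `1/q`.
-/

theorem tendsto_sub_mul_div_sub_nhdsNE {K : Type*} [Field K] [TopologicalSpace K]
    {F : K → K} {a : K} (hF : ContinuousAt F a) :
    Tendsto (fun z => (z - a) * (F z / (z - a))) (𝓝[≠] a) (𝓝 (F a)) := by
  refine (hF.tendsto.mono_left nhdsWithin_le_nhds).congr' ?_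
  filter_upwards [self_mem_nhdsWithin] with z hz
  exact (mul_div_cancel₀ _ (sub_ne_zero.mpr hz)).symm

section ProductOfQuotients

variable {K ι : Type*} [Field K] [Fintype ι]

theorem prod_div_eq_pow_of_eq_mul {f g : ι → K} {c : K} (h : ∀ i, f i = c * g i)
    (hg : ∀ i, g i ≠ 0) : ∏ i, f i / g i = c ^ Fintype.card ι := by
  simp [h, mul_div_cancel_right₀ _ (hg _)]

theorem continuousAt_prod_div [TopologicalSpace K] [IsTopologicalDivisionRing K]
    {f g : ι → K → K} {a : K} (hf : ∀ i, ContinuousAt (f i) a) (hg : ∀ i, ContinuousAt (g i) a)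
    (hg0 : ∀ i, g i a ≠ 0) : ContinuousAt (fun z => ∏ i, f i z / g i z) a :=
  tendsto_finsetProd _ fun i _ => (hf i).div (hg i) (hg0 i)

end ProductOfQuotients

section XiProduct

variable {K ι : Type*} [Field K] [Fintype ι] {p q τ : K} {ξ : ι → K}

def xiProduct (p q τ : K) (ξ : ι → K) (z : K) : K :=
  (∏ l, (p + q * ξ l * z - ξ l) / (z - ξ l)) * ∏ l, (τ - z * ξ l) / (1 + τ - z - ξ l)

theorem continuousAt_xiProduct [TopologicalSpace K] [IsTopologicalDivisionRing K] {a : K}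
    (h₁ : ∀ l, ξ l ≠ a) (h₂ : ∀ l, ξ l ≠ 1 + τ - a) : ContinuousAt (xiProduct p q τ ξ) a :=
  (continuousAt_prod_div (fun _ => by fun_prop) (fun _ => by fun_prop)
    fun l => sub_ne_zero.mpr (h₁ l).symm).mul
  (continuousAt_prod_div (fun _ => by fun_prop) (fun _ => by fun_prop)
    fun l => sub_ne_zero.mpr (h₂ l).symm)

theorem xiProduct_one (hpq : p + q = 1) (hξ1 : ∀ l, ξ l ≠ 1) (hξτ : ∀ l, ξ l ≠ τ) :
    xiProduct p q τ ξ 1 = p ^ Fintype.card ι := by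
  rw [xiProduct, prod_div_eq_pow_of_eq_mul (c := p), prod_div_eq_pow_of_eq_mul (c := 1)]
  · simp
  · exact fun l => by ring
  · exact fun l => by simpa using sub_ne_zero.mpr (hξτ l).symm
  · exact fun l => by linear_combination ξ l * hpq
  · exact fun l => sub_ne_zero.mpr (hξ1 l).symm

theorem xiProduct_tau (hpq : p + q = 1) (hqτ : q * τ = p) (hξ1 : ∀ l, ξ l ≠ 1)
    (hξτ : ∀ l, ξ l ≠ τ) : xiProduct p q τ ξ τ = p ^ Fintype.card ι := by
  rw [xiProduct, prod_div_eq_pow_of_eq_mul (c := q), prod_div_eq_pow_of_eq_mul (c := τ)]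
  · simp [← mul_pow, hqτ]
  · exact fun l => by ring
  · exact fun l => by simpa using sub_ne_zero.mpr (hξ1 l).symm
  · exact fun l => by linear_combination (ξ l - 1) * hqτ + ξ l * hpq
  · exact fun l => sub_ne_zero.mpr (hξτ l).symm

end XiProduct

theorem stmt5_general (p q τ : ℂ) (hpq : p + q = 1) (hpq0 : p * q ≠ 0) (hτ : τ = p / q)
    (hτ1 : τ ≠ 1) (k : ℕ) (ξ : Fin k → ℂ)
    (hξ1 : ∀ l, ξ l ≠ 1) (hξτ : ∀ l, ξ l ≠ τ) :
    Tendsto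
      (fun z : ℂ => (z - 1) *
        ((∏ l, (p + q * ξ l * z - ξ l) / (z - ξ l)) *
          (∏ l, (τ - z * ξ l) / (1 + τ - z - ξ l)) *
          ((2 * z - 1 - τ) / ((z - 1) * (q * z - p)))))
      (nhdsWithin 1 {(1 : ℂ)}ᶜ) (nhds (p ^ k / q)) ∧
    Tendsto
      (fun z : ℂ => (z - τ) *
        ((∏ l, (p + q * ξ l * z - ξ l) / (z - ξ l)) *
          (∏ l, (τ - z * ξ l) / (1 + τ - z - ξ l)) *
          ((2 * z - 1 - τ) / ((z - 1) * (q * z - p)))))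
      (nhdsWithin τ {τ}ᶜ) (nhds (p ^ k / q)) := by
  have hq : q ≠ 0 := right_ne_zero_of_mul hpq0
  have hqτ : q * τ = p := by rw [hτ]; field_simp
  have hτ1' : τ - 1 ≠ 0 := sub_ne_zero.mpr hτ1
  have hqp : q * 1 - p ≠ 0 := by
    rw [← hqτ, ← mul_sub]
    exact mul_ne_zero hq (sub_ne_zero.mpr hτ1.symm)
  have hF1 : ContinuousAt (fun z => xiProduct p q τ ξ z * ((2 * z - 1 - τ) / (q * z - p))) 1 :=
    (continuousAt_xiProduct hξ1 fun l => by rw [add_sub_cancel_left]; exact hξτ l).mul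
      (ContinuousAt.div (by fun_prop) (by fun_prop) hqp)
  have hFτ : ContinuousAt (fun z => xiProduct p q τ ξ z * ((2 * z - 1 - τ) / ((z - 1) * q))) τ :=
    (continuousAt_xiProduct hξτ fun l => by rw [add_sub_cancel_right]; exact hξ1 l).mul
      (ContinuousAt.div (by fun_prop) (by fun_prop) (mul_ne_zero hτ1' hq))
  constructor
  · convert tendsto_sub_mul_div_sub_nhdsNE hF1 using 2 with z
    · rw [xiProduct, ← div_div]
      ring
    · rw [xiProduct_one hpq hξ1 hξτ, Fintype.card_fin, eq_comm, mul_div_assoc',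
        div_eq_div_iff hqp hq]
      linear_combination -p ^ k * hqτ
  · convert tendsto_sub_mul_div_sub_nhdsNE hFτ using 2 with z
    · rw [xiProduct, show (z - 1) * (q * z - p) = (z - τ) * ((z - 1) * q) by
        linear_combination (z - 1) * hqτ, ← div_div]
      ring
    · rw [xiProduct_tau hpq hqτ hξ1 hξτ, Fintype.card_fin, show 2 * τ - 1 - τ = τ - 1 by ring,
        div_mul_cancel_left₀ hτ1', div_eq_mul_inv]

/-- Residues of g at the simple poles z = 1 and z = τ both equal p^k/q.
(The residue at a simple pole a is the limit of (z−a)·g(z) as z → a.) -/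
theorem stmt5 (p q τ : ℂ) (hpq : p + q = 1) (hpq0 : p * q ≠ 0) (hτ : τ = p / q)
    (hτ1 : τ ≠ 1) (k : ℕ) (ξ : Fin k → ℂ)
    (hξ1 : ∀ l, ξ l ≠ 1) (hξτ : ∀ l, ξ l ≠ τ)
    (hdist : ∀ i j, i ≠ j → ξ i ≠ ξ j)
    (hsum : ∀ i j, 1 + τ - ξ i - ξ j ≠ 0) :
    Tendsto
      (fun z : ℂ => (z - 1) *
        ((∏ l, (p + q * ξ l * z - ξ l) / (z - ξ l)) *
          (∏ l, (τ - z * ξ l) / (1 + τ - z - ξ l)) *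
          ((2 * z - 1 - τ) / ((z - 1) * (q * z - p)))))
      (nhdsWithin 1 {(1 : ℂ)}ᶜ) (nhds (p ^ k / q)) ∧
    Tendsto
      (fun z : ℂ => (z - τ) *
        ((∏ l, (p + q * ξ l * z - ξ l) / (z - ξ l)) *
          (∏ l, (τ - z * ξ l) / (1 + τ - z - ξ l)) *
          ((2 * z - 1 - τ) / ((z - 1) * (q * z - p)))))
      (nhdsWithin τ {τ}ᶜ) (nhds (p ^ k / q)) :=
  stmt5_general p q τ hpq hpq0 hτ hτ1 k ξ hξ1 hξτ
end

section
/- Let p, q be complex with p+q=1, pq ≠ 0, τ = p/q, and ξ₁,...,ξ_k pairwise distinct complex numbers avoiding the poles. With g as above, for each l, Res_{z=ξ_l} g(z) = (ξ_l² − τ) · ∏_{i≠l} (p + q·ξᵢξ_l − ξᵢ)/(ξ_l − ξᵢ) · (τ − ξ_l ξᵢ)/(1 + τ − ξ_l − ξᵢ). -/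
/-!
After cancelling `z - ξ_l` against the `l`-th factor of the first product, what remains is
continuous at `ξ_l`, so the residue is its value there. At `z = ξ_l` the cancelled numerator
`p + q ξ_l² - ξ_l = (q ξ_l - p)(ξ_l - 1)` kills the factor `(z - 1)(q z - p)` in the denominator,
and the `l`-th factor of the second product times `2 z - 1 - τ` gives `ξ_l² - τ`.
-/

open Finset Filter Topology

section SimplePole

variable {K : Type*} [Field K] [TopologicalSpace K] [IsTopologicalDivisionRing K]

theorem tendsto_sub_mul_prod_div_sub_mul {ι : Type*} [DecidableEq ι] {s : Finset ι} {l : ι}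
    (hl : l ∈ s) {f : ι → K → K} {c : ι → K} {B : K → K}
    (hf : ∀ m ∈ s, ContinuousAt (f m) (c l)) (hB : ContinuousAt B (c l))
    (hc : ∀ m ∈ s, m ≠ l → c m ≠ c l) :
    Tendsto (fun z => (z - c l) * ((∏ m ∈ s, f m z / (z - c m)) * B z)) (𝓝[≠] c l)
      (𝓝 (f l (c l) * (∏ m ∈ s.erase l, f m (c l) / (c l - c m)) * B (c l))) := by
  have hrest : ContinuousAt (fun z => ∏ m ∈ s.erase l, f m z / (z - c m)) (c l) :=
    tendsto_finsetProd _ fun m hm =>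
      (hf m (mem_of_mem_erase hm)).div (by fun_prop)
        (sub_ne_zero.mpr (hc m (mem_of_mem_erase hm) (ne_of_mem_erase hm)).symm)
  have hreg : ContinuousAt (fun z => f l z * (∏ m ∈ s.erase l, f m z / (z - c m)) * B z) (c l) :=
    ((hf l hl).mul hrest).mul hB
  refine hreg.continuousWithinAt.tendsto.congr' ?_
  filter_upwards [self_mem_nhdsWithin] with z (hz : z ≠ c l)
  rw [← mul_prod_erase s _ hl]
  field_simp [sub_ne_zero.mpr hz]

end SimplePole

theorem residue_factor_eq {K : Type*} [Field K] {p q τ a : K} (hpq : p + q = 1)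
    (ha1 : a - 1 ≠ 0) (hqa : q * a - p ≠ 0) (haa : 1 + τ - a - a ≠ 0) :
    (p + q * a * a - a) * ((τ - a * a) / (1 + τ - a - a) *
      ((2 * a - 1 - τ) / ((a - 1) * (q * a - p)))) = a ^ 2 - τ := by
  have hfactor : p + q * a * a - a = (q * a - p) * (a - 1) := by linear_combination a * hpq
  rw [hfactor]
  field_simp
  ring

/-- Residue of g at the simple pole z = ξ_l. -/
theorem stmt6 (p q τ : ℂ) (hpq : p + q = 1) (hpq0 : p * q ≠ 0) (hτ : τ = p / q)
    (k : ℕ) (ξ : Fin k → ℂ)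
    (hdist : ∀ i j, i ≠ j → ξ i ≠ ξ j)
    (hξ1 : ∀ l, ξ l ≠ 1) (hξτ : ∀ l, ξ l ≠ τ)
    (hsum : ∀ i j, 1 + τ - ξ i - ξ j ≠ 0)
    (l : Fin k) :
    Tendsto
      (fun z : ℂ => (z - ξ l) *
        ((∏ m, (p + q * ξ m * z - ξ m) / (z - ξ m)) *
          (∏ m, (τ - z * ξ m) / (1 + τ - z - ξ m)) *
          ((2 * z - 1 - τ) / ((z - 1) * (q * z - p)))))
      (nhdsWithin (ξ l) {ξ l}ᶜ)
      (nhds ((ξ l ^ 2 - τ) * ∏ i ∈ univ.erase l,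
        ((p + q * ξ i * ξ l - ξ i) / (ξ l - ξ i) *
          ((τ - ξ l * ξ i) / (1 + τ - ξ l - ξ i))))) := by
  have hq : q ≠ 0 := right_ne_zero_of_mul hpq0
  have ha1 : ξ l - 1 ≠ 0 := sub_ne_zero.mpr (hξ1 l)
  have hqa : q * ξ l - p ≠ 0 := fun h => hξτ l (by rw [hτ, eq_div_iff hq]; linear_combination h)
  have hB : ContinuousAt (fun z => (∏ m, (τ - z * ξ m) / (1 + τ - z - ξ m)) *
      ((2 * z - 1 - τ) / ((z - 1) * (q * z - p)))) (ξ l) :=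
    (tendsto_finsetProd _ fun m _ => ContinuousAt.div (by fun_prop) (by fun_prop) (hsum l m)).mul
      (ContinuousAt.div (by fun_prop) (by fun_prop) (mul_ne_zero ha1 hqa))
  have hlim := tendsto_sub_mul_prod_div_sub_mul (mem_univ l) (f := fun m z => p + q * ξ m * z - ξ m)
    (fun _ _ => by fun_prop) hB fun m _ hm => hdist m l hm
  convert hlim using 1
  · ext z
    ring
  congr 1
  rw [← mul_prod_erase univ (fun m => (τ - ξ l * ξ m) / (1 + τ - ξ l - ξ m)) (mem_univ l),
    prod_mul_distrib, ← residue_factor_eq hpq ha1 hqa (hsum l l)]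
  ring
end

section
/- Let p, q be complex with p+q=1, pq ≠ 0, τ = p/q, and ξ₁,...,ξ_k complex numbers avoiding the poles. With g as above and 1 + τ = 1/q, for each l, Res_{z = 1+τ−ξ_l} g(z) = Res_{z = ξ_l} g(z). -/
open Finset Filter Topology

/-!
The reflection `z ↦ 1 + τ - z` exchanges the poles `ξ_l` and `1 + τ - ξ_l`, and `g` is odd
under it: since `q (1 + τ) = 1` and `q τ = p`, it swaps the two factors attached to each `ξ_m`
(up to the constant `q`, which cancels between numerators) and negates the last factor. As
`z - (1 + τ - ξ_l)` turns into `ξ_l - z`, the function `(z - ξ_l) g(z)` near `ξ_l` is the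
reflection of `(z - (1 + τ - ξ_l)) g(z)` near `1 + τ - ξ_l`, so the two residues agree.
-/

theorem tendsto_sub_mul_nhdsNE_reflect_iff {R : Type*} [CommRing R] [TopologicalSpace R]
    [IsTopologicalAddGroup R] {f : R → R} {c : R} (hf : ∀ z, f (c - z) = -f z) (a r : R) :
    Tendsto (fun z => (z - (c - a)) * f z) (𝓝[≠] (c - a)) (𝓝 r) ↔
      Tendsto (fun z => (z - a) * f z) (𝓝[≠] a) (𝓝 r) := by
  have hmap : map (Homeomorph.subLeft c) (𝓝[≠] a) = 𝓝[≠] (c - a) :=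
    (Homeomorph.subLeft c).map_punctured_nhds_eq a
  rw [← hmap, tendsto_map'_iff]
  refine tendsto_congr fun w => ?_
  simp only [Function.comp_apply, Homeomorph.subLeft_apply, hf]
  ring

section Reflection

variable {K : Type*} [Field K] {p q τ : K}

theorem pair_factor_reflect (hpq : p + q = 1) (hqτ : q * τ = p) (ξ z : K) :
    (p + q * ξ * (1 + τ - z) - ξ) / (1 + τ - z - ξ) *
        ((τ - (1 + τ - z) * ξ) / (1 + τ - (1 + τ - z) - ξ)) =
      (p + q * ξ * z - ξ) / (z - ξ) * ((τ - z * ξ) / (1 + τ - z - ξ)) := by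
  rw [div_mul_div_comm, div_mul_div_comm]
  congr 1
  · linear_combination (ξ * (τ - (1 + τ - z) * ξ) - ξ * (τ - z * ξ)) * hpq
      + ((1 - ξ) * (τ - z * ξ) - (1 - ξ) * (τ - (1 + τ - z) * ξ)) * hqτ
  · ring

theorem boundary_factor_reflect (hqτ : q * τ = p) (z : K) :
    (2 * (1 + τ - z) - 1 - τ) / ((1 + τ - z - 1) * (q * (1 + τ - z) - p)) =
      -((2 * z - 1 - τ) / ((z - 1) * (q * z - p))) := by
  rw [← neg_div]
  congr 1
  · ring
  · linear_combination (1 + τ - 2 * z) * hqτ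

def pairedPoleFn {ι : Type*} [Fintype ι] (p q τ : K) (ξ : ι → K) (z : K) : K :=
  (∏ m, (p + q * ξ m * z - ξ m) / (z - ξ m)) *
    (∏ m, (τ - z * ξ m) / (1 + τ - z - ξ m)) *
    ((2 * z - 1 - τ) / ((z - 1) * (q * z - p)))

theorem pairedPoleFn_reflect {ι : Type*} [Fintype ι] (hpq : p + q = 1) (hqτ : q * τ = p)
    (ξ : ι → K) (z : K) : pairedPoleFn p q τ ξ (1 + τ - z) = -pairedPoleFn p q τ ξ z := by
  unfold pairedPoleFn
  rw [← prod_mul_distrib, ← prod_mul_distrib, boundary_factor_reflect hqτ, mul_neg]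
  congr 2
  exact prod_congr rfl fun m _ => pair_factor_reflect hpq hqτ (ξ m) z

end Reflection

theorem stmt7_general (p q τ : ℂ) (hpq : p + q = 1) (hpq0 : p * q ≠ 0) (hτ : τ = p / q)
    (k : ℕ) (ξ : Fin k → ℂ)
    (l : Fin k) (r : ℂ) :
    Tendsto
      (fun z : ℂ => (z - (1 + τ - ξ l)) *
        ((∏ m, (p + q * ξ m * z - ξ m) / (z - ξ m)) *
          (∏ m, (τ - z * ξ m) / (1 + τ - z - ξ m)) *
          ((2 * z - 1 - τ) / ((z - 1) * (q * z - p)))))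
      (nhdsWithin (1 + τ - ξ l) {(1 + τ - ξ l)}ᶜ) (nhds r) ↔
    Tendsto
      (fun z : ℂ => (z - ξ l) *
        ((∏ m, (p + q * ξ m * z - ξ m) / (z - ξ m)) *
          (∏ m, (τ - z * ξ m) / (1 + τ - z - ξ m)) *
          ((2 * z - 1 - τ) / ((z - 1) * (q * z - p)))))
      (nhdsWithin (ξ l) {ξ l}ᶜ) (nhds r) := by
  have hqτ : q * τ = p := by rw [hτ, mul_div_cancel₀ p (right_ne_zero_of_mul hpq0)]
  exact tendsto_sub_mul_nhdsNE_reflect_iff (pairedPoleFn_reflect hpq hqτ ξ) (ξ l) r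

/-- The residues of g at the paired simple poles ξ_l and 1 + τ − ξ_l coincide:
for every r, (z − ξ_l)·g(z) → r as z → ξ_l iff (z − (1+τ−ξ_l))·g(z) → r as
z → 1 + τ − ξ_l. -/
theorem stmt7 (p q τ : ℂ) (hpq : p + q = 1) (hpq0 : p * q ≠ 0) (hτ : τ = p / q)
    (k : ℕ) (ξ : Fin k → ℂ)
    (hdist : ∀ i j, i ≠ j → ξ i ≠ ξ j)
    (hξ1 : ∀ l, ξ l ≠ 1) (hξτ : ∀ l, ξ l ≠ τ)
    (hsum : ∀ i j, 1 + τ - ξ i - ξ j ≠ 0)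
    (l : Fin k) (r : ℂ) :
    Tendsto
      (fun z : ℂ => (z - (1 + τ - ξ l)) *
        ((∏ m, (p + q * ξ m * z - ξ m) / (z - ξ m)) *
          (∏ m, (τ - z * ξ m) / (1 + τ - z - ξ m)) *
          ((2 * z - 1 - τ) / ((z - 1) * (q * z - p)))))
      (nhdsWithin (1 + τ - ξ l) {(1 + τ - ξ l)}ᶜ) (nhds r) ↔
    Tendsto
      (fun z : ℂ => (z - ξ l) *
        ((∏ m, (p + q * ξ m * z - ξ m) / (z - ξ m)) *
          (∏ m, (τ - z * ξ m) / (1 + τ - z - ξ m)) *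
          ((2 * z - 1 - τ) / ((z - 1) * (q * z - p)))))
      (nhdsWithin (ξ l) {ξ l}ᶜ) (nhds r) :=
  stmt7_general p q τ hpq hpq0 hτ k ξ l r
end

section
/- Let Y₊ = {2i − 1 : i ∈ ℕ, i ≥ 1} and let S₊ = {2i₁ − 1, 2(i₁+i₂) − 1, ..., 2(i₁+⋯+i_{k}) − 1} with i₁, ..., i_k positive integers. Then σ(S₊, Y₊ \ S₊) = k·i₁ + (k−1)·i₂ + ⋯ + 1·i_k − k(k+1)/2, where σ(U, V) = #{(u,v) : u ∈ U, v ∈ V, u ≥ v}. -/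
/-!
Write `s_l = 2 P_l - 1` with `P_l = i₁ + ⋯ + i_l`. Exactly `P_l` odd positive integers are at most
`s_l`, and `l` of them lie in `S₊`, so `σ(S₊, Y₊ \ S₊) = ∑_l (P_l - l)`. The claim follows from
`∑_l l = k(k+1)/2` and, exchanging the order of summation, `∑_l P_l = ∑_m (k - m + 1) i_m`.
-/

open Finset Function

/-- The paper's `σ(U, V)`. -/
noncomputable def geCount {α : Type*} [LE α] (U V : Set α) : ℕ :=
  {uv : α × α | uv.1 ∈ U ∧ uv.2 ∈ V ∧ uv.2 ≤ uv.1}.ncard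

/-- The paper's `Y₊`. -/
def posOdds : Set ℤ := {x | ∃ n : ℕ, 1 ≤ n ∧ x = 2 * (n : ℤ) - 1}

theorem geCount_range_eq_sum {α ι : Type*} [Preorder α] [Fintype ι] {s : ι → α}
    (hs : Injective s) {V : Set α} (hV : ∀ l, (V ∩ Set.Iic (s l)).Finite) :
    geCount (Set.range s) V = ∑ l, (V ∩ Set.Iic (s l)).ncard := by
  have hpairs : {uv : α × α | uv.1 ∈ Set.range s ∧ uv.2 ∈ V ∧ uv.2 ≤ uv.1} =
      ⋃ l, Prod.mk (s l) '' (V ∩ Set.Iic (s l)) := by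
    ext ⟨u, v⟩
    simp only [Set.mem_ofPred_eq, Set.mem_range, Set.mem_iUnion, Set.mem_image, Set.mem_inter_iff,
      Set.mem_Iic, Prod.mk.injEq]
    constructor
    · rintro ⟨⟨l, rfl⟩, hv, hvu⟩
      exact ⟨l, v, ⟨hv, hvu⟩, rfl, rfl⟩
    · rintro ⟨l, v, ⟨hv, hvu⟩, rfl, rfl⟩
      exact ⟨⟨l, rfl⟩, hv, hvu⟩
  have hdisj : Pairwise (Disjoint on fun l => Prod.mk (s l) '' (V ∩ Set.Iic (s l))) := by
    intro a b hab
    refine Set.disjoint_left.2 ?_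
    rintro _ ⟨v, -, rfl⟩ ⟨w, -, h⟩
    exact hab (hs (Prod.ext_iff.1 h).1).symm
  rw [geCount, hpairs, Set.ncard_iUnion_of_finite (fun l => (hV l).image _) hdisj,
    finsum_eq_sum_of_fintype]
  simp only [Set.ncard_image_of_injective _ (Prod.mk_right_injective _)]

theorem StrictMono.ncard_range_inter_Iic {α ι : Type*} [LinearOrder ι] [LocallyFiniteOrderBot ι]
    [Preorder α] {s : ι → α} (hs : StrictMono s) (l : ι) :
    (Set.range s ∩ Set.Iic (s l)).ncard = #(Iic l) := by
  have : Set.range s ∩ Set.Iic (s l) = s '' Set.Iic l := by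
    ext v
    constructor
    · rintro ⟨⟨m, rfl⟩, h⟩
      exact ⟨m, hs.le_iff_le.1 h, rfl⟩
    · rintro ⟨m, hm, rfl⟩
      exact ⟨⟨m, rfl⟩, hs.monotone hm⟩
  rw [this, Set.ncard_image_of_injective _ hs.injective, ← coe_Iic, Set.ncard_coe_finset]

theorem posOdds_inter_Iic_eq_image (P : ℕ) :
    posOdds ∩ Set.Iic (2 * P - 1) = (fun n : ℕ => 2 * (n : ℤ) - 1) '' Set.Icc 1 P := by
  ext v
  simp only [posOdds, Set.mem_inter_iff, Set.mem_ofPred_eq, Set.mem_Iic, Set.mem_image,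
    Set.mem_Icc]
  constructor
  · rintro ⟨⟨n, hn, rfl⟩, hle⟩
    exact ⟨n, ⟨hn, by omega⟩, rfl⟩
  · rintro ⟨n, ⟨hn, hnP⟩, rfl⟩
    exact ⟨⟨n, hn, rfl⟩, by omega⟩

theorem finite_posOdds_inter_Iic (u : ℤ) : (posOdds ∩ Set.Iic u).Finite :=
  (Set.finite_Icc 1 u).subset fun v ⟨⟨n, hn, hv⟩, hvu⟩ => ⟨by omega, hvu⟩

theorem ncard_posOdds_inter_Iic (P : ℕ) : (posOdds ∩ Set.Iic (2 * P - 1)).ncard = P := by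
  rw [posOdds_inter_Iic_eq_image, Set.ncard_image_of_injective _ (fun a b h => by omega),
    ← Finset.coe_Icc, Set.ncard_coe_finset, Nat.card_Icc, Nat.add_sub_cancel]

theorem strictMono_sum_Iic {ι M : Type*} [LinearOrder ι] [LocallyFiniteOrderBot ι]
    [AddCommMonoid M] [PartialOrder M] [IsOrderedCancelAddMonoid M] {f : ι → M}
    (hf : ∀ l, 0 < f l) : StrictMono fun l => ∑ m ∈ Iic l, f m := fun a b hab =>
  sum_lt_sum_of_subset (Iic_subset_Iic.2 hab.le) (mem_Iic.2 le_rfl) (by simpa using hab)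
    (hf b) fun j _ _ => (hf j).le

theorem Fin.sum_sum_Iic {M : Type*} [AddCommMonoid M] {k : ℕ} (f : Fin k → M) :
    ∑ l, ∑ m ∈ Iic l, f m = ∑ m : Fin k, (k - (m : ℕ)) • f m := by
  rw [sum_comm' (t' := univ) (s' := fun m => Ici m) (fun l m => by simp)]
  simp only [Finset.sum_const, Fin.card_Ici]

theorem Fin.sum_val_add_one (k : ℕ) : ∑ l : Fin k, ((l : ℕ) + 1) = k * (k + 1) / 2 := by
  rw [Fin.sum_univ_eq_sum_range (· + 1), ← add_zero (∑ j ∈ range k, (j + 1)),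
    ← sum_range_succ' (fun j => j) k, sum_range_id, Nat.add_sub_cancel, Nat.mul_comm]

/-- σ(S₊, Y₊ \ S₊) = k·i₁ + (k−1)·i₂ + ⋯ + i_k − k(k+1)/2 for the alternating
initial condition, where S₊ ⊆ Y₊ = {odd positive integers} is parametrized by
gap variables i₁, …, i_k ≥ 1 and s_l = 2(i₁ + ⋯ + i_l) − 1. -/
theorem stmt9 (k : ℕ) (i : Fin k → ℕ) (hi : ∀ l, 1 ≤ i l) :
    Set.ncard {uv : ℤ × ℤ |
        uv.1 ∈ Set.range (fun l : Fin k =>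
          2 * (∑ m ∈ univ.filter (fun m => m ≤ l), (i m : ℤ)) - 1) ∧
        uv.2 ∈ {x : ℤ | ∃ n : ℕ, 1 ≤ n ∧ x = 2 * (n : ℤ) - 1} \
          Set.range (fun l : Fin k =>
            2 * (∑ m ∈ univ.filter (fun m => m ≤ l), (i m : ℤ)) - 1) ∧
        uv.2 ≤ uv.1}
      + k * (k + 1) / 2 = ∑ l : Fin k, (k - (l : ℕ)) * i l := by
  set P : Fin k → ℕ := fun l => ∑ m ∈ Iic l, i m
  have hs : (fun l : Fin k => 2 * (∑ m ∈ univ.filter (fun m => m ≤ l), (i m : ℤ)) - 1) =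
      fun l => 2 * (P l : ℤ) - 1 := by
    funext l
    simp [P, filter_ge_eq_Iic]
  rw [hs]
  set s : Fin k → ℤ := fun l => 2 * (P l : ℤ) - 1
  have hs_mono : StrictMono s := fun a b hab => by
    have : P a < P b := strictMono_sum_Iic (f := i) hi hab
    simp only [s]
    omega
  have hs_odd : Set.range s ⊆ posOdds := by
    rintro _ ⟨l, rfl⟩
    have : i l ≤ P l := single_le_sum (fun _ _ => Nat.zero_le _) (mem_Iic.2 le_rfl)
    exact ⟨P l, (hi l).trans this, rfl⟩
  change geCount (Set.range s) (posOdds \ Set.range s) + _ = _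
  rw [geCount_range_eq_sum hs_mono.injective
      fun l => (finite_posOdds_inter_Iic _).subset (Set.inter_subset_inter_left _ Set.sdiff_subset),
    ← Fin.sum_val_add_one]
  have hcount (l : Fin k) :
      ((posOdds \ Set.range s) ∩ Set.Iic (s l)).ncard + ((l : ℕ) + 1) = P l := by
    rw [← Fin.card_Iic, ← hs_mono.ncard_range_inter_Iic, Set.inter_sdiff_distrib_right,
      Set.ncard_sdiff_add_ncard_of_subset (Set.inter_subset_inter_left _ hs_odd)
        (finite_posOdds_inter_Iic _), ncard_posOdds_inter_Iic]
  rw [← sum_add_distrib, sum_congr rfl fun l _ => hcount l, Fin.sum_sum_Iic]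
  simp only [smul_eq_mul]
end
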